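/- arXiv:2406.13930 — 2 statements merged into one kernel-verified Lean document; each statement's English description precedes it below -/
import Mathlib

section
/- Let U be a finite nonempty type, Q : U → ℝ, α > 0, and let p, q be probability mass functions on U. If KL(p ‖ softmax(Q/α)) ≤ KL(q ‖ softmax(Q/α)), then Σ_u p(u)·Q(u) + α·H(p) ≥ Σ_u q(u)·Q(u) + α·H(q). Equivalently, Σ_u p(u)·(Q(u) − α·log p(u)) ≥ Σ_u q(u)·(Q(u) − α·log q(u)) (with the convention 0·log 0 = 0). -/
/-- `p` is a probability mass function on the finite type `U`. -/
def IsPMF {U : Type*} [Fintype U] (p : U → ℝ) : Prop :=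
  (∀ u, 0 ≤ p u) ∧ ∑ u, p u = 1

/-- Shannon entropy of `p`, with the convention `0 · log 0 = 0`. -/
noncomputable def entropy {U : Type*} [Fintype U] (p : U → ℝ) : ℝ :=
  -∑ u, if 0 < p u then p u * Real.log (p u) else 0

/-- Kullback–Leibler divergence `KL(p ‖ q)`, summing only over `p u > 0`. -/
noncomputable def KL {U : Type*} [Fintype U] (p q : U → ℝ) : ℝ :=
  ∑ u, if 0 < p u then p u * Real.log (p u / q u) else 0

/-- Softmax distribution of `f`. -/
noncomputable def softmax {U : Type*} [Fintype U] (f : U → ℝ) : U → ℝ :=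
  fun u => Real.exp (f u) / ∑ v, Real.exp (f v)

lemma kl_softmax_eq {U : Type*} [Fintype U] [Nonempty U] (f : U → ℝ) (p : U → ℝ)
    (hp : IsPMF p) :
    KL p (softmax f) = (∑ u, if 0 < p u then p u * Real.log (p u) else 0)
      - (∑ u, p u * f u) + Real.log (∑ v, Real.exp (f v)) := by
  have hZ : 0 < ∑ v, Real.exp (f v) :=
    Finset.sum_pos (fun v _ => Real.exp_pos _) Finset.univ_nonempty
  have key : ∀ u, (if 0 < p u then p u * Real.log (p u / softmax f u) else 0)
      = (if 0 < p u then p u * Real.log (p u) else 0) - p u * f u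
        + p u * Real.log (∑ v, Real.exp (f v)) := by
    intro u
    rcases (hp.1 u).lt_or_eq with hpos | hzero
    · simp only [if_pos hpos]
      rw [softmax, Real.log_div (ne_of_gt hpos)
        (ne_of_gt (div_pos (Real.exp_pos _) hZ)),
        Real.log_div (ne_of_gt (Real.exp_pos _)) (ne_of_gt hZ), Real.log_exp]
      ring
    · simp [← hzero]
  rw [KL]
  simp only [key]
  rw [Finset.sum_add_distrib, Finset.sum_sub_distrib, ← Finset.sum_mul, hp.2, one_mul]

/-- Soft policy improvement: if `p` achieves a KL to `softmax (Q/α)` no larger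
than that of `q`, then `p` has at least as large an expected soft value. -/
theorem soft_policy_improvement (U : Type*) [Fintype U] [Nonempty U]
    (Q : U → ℝ) (α : ℝ) (hα : 0 < α) (p q : U → ℝ)
    (hp : IsPMF p) (hq : IsPMF q)
    (h : KL p (softmax (fun u => Q u / α)) ≤ KL q (softmax (fun u => Q u / α))) :
    (∑ u, q u * Q u) + α * entropy q ≤ (∑ u, p u * Q u) + α * entropy p ∧
    (∑ u, q u * (Q u - α * Real.log (q u))) ≤
      ∑ u, p u * (Q u - α * Real.log (p u)) := by
  set Z := Real.log (∑ v, Real.exp (Q v / α)) with hZ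
  have keyr : ∀ (r : U → ℝ), IsPMF r →
      α * KL r (softmax (fun u => Q u / α))
        = -(α * entropy r) - (∑ u, r u * Q u) + α * Z := by
    intro r hr
    rw [kl_softmax_eq _ r hr, entropy]
    have : ∑ u, r u * (Q u / α) = (∑ u, r u * Q u) / α := by
      rw [Finset.sum_div]; exact Finset.sum_congr rfl fun u _ => by ring
    rw [this]
    field_simp
    ring
  have hmul : α * KL p (softmax (fun u => Q u / α))
      ≤ α * KL q (softmax (fun u => Q u / α)) := by
    exact mul_le_mul_of_nonneg_left h hα.le
  rw [keyr p hp, keyr q hq] at hmul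
  have main : (∑ u, q u * Q u) + α * entropy q ≤ (∑ u, p u * Q u) + α * entropy p := by
    linarith
  refine ⟨main, ?_⟩
  have expand : ∀ (r : U → ℝ), IsPMF r →
      (∑ u, r u * (Q u - α * Real.log (r u))) = (∑ u, r u * Q u) + α * entropy r := by
    intro r hr
    have term : ∀ u, r u * (Q u - α * Real.log (r u))
        = r u * Q u - α * (if 0 < r u then r u * Real.log (r u) else 0) := by
      intro u
      rcases (hr.1 u).lt_or_eq with hpos | hzero
      · rw [if_pos hpos]; ring
      · simp [← hzero]
    simp only [term]
    rw [Finset.sum_sub_distrib, entropy, ← Finset.mul_sum]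
    ring
  rw [expand p hp, expand q hq]
  exact main
end

section
/- Let n ∈ ℕ, let U₁, …, Uₙ be finite nonempty types, let Q_tot : (U₁ × ⋯ × Uₙ) → ℝ, and let Qᵢ : Uᵢ → ℝ satisfy the IGM property: every joint action u* such that u*ᵢ maximizes Qᵢ over Uᵢ for every i is a maximizer of Q_tot. Let fᵢ : ℝ → ℝ be strictly increasing and α > 0, and define local policies πᵢ(a) = exp(fᵢ(Qᵢ(a))/α) / Σ_{b ∈ Uᵢ} exp(fᵢ(Qᵢ(b))/α) and the joint policy π_jt(u) = Πᵢ πᵢ(uᵢ). Then every joint action u* maximizing π_jt over U₁ × ⋯ × Uₙ is a maximizer of Q_tot over all joint actions. -/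
/-- ME-IGM alignment: if the local Q-values satisfy the IGM property for
`Qtot`, then any maximizer of the factorized softmax joint policy (built from
strictly increasing transformations of the local Q-values) maximizes `Qtot`. -/
theorem me_igm_alignment (n : ℕ) (U : Fin n → Type*) [∀ i, Fintype (U i)]
    [∀ i, Nonempty (U i)] (Qtot : (∀ i, U i) → ℝ) (Q : ∀ i, U i → ℝ)
    (hIGM : ∀ u : ∀ i, U i, (∀ i, ∀ a : U i, Q i a ≤ Q i (u i)) →
      ∀ v : ∀ i, U i, Qtot v ≤ Qtot u)
    (f : Fin n → ℝ → ℝ) (hf : ∀ i, StrictMono (f i)) (α : ℝ) (hα : 0 < α)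
    (π : ∀ i, U i → ℝ)
    (hπ : ∀ i (a : U i),
      π i a = Real.exp (f i (Q i a) / α) / ∑ b : U i, Real.exp (f i (Q i b) / α))
    (πjt : (∀ i, U i) → ℝ) (hπjt : ∀ u, πjt u = ∏ i, π i (u i))
    (ustar : ∀ i, U i) (hustar : ∀ v : ∀ i, U i, πjt v ≤ πjt ustar) :
    ∀ v : ∀ i, U i, Qtot v ≤ Qtot ustar := by
  have hsumpos : ∀ i, 0 < ∑ b : U i, Real.exp (f i (Q i b) / α) := fun i =>
    Finset.sum_pos (fun b _ => Real.exp_pos _) Finset.univ_nonempty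
  have hpos : ∀ i (a : U i), 0 < π i a := by
    intro i a
    rw [hπ]
    exact div_pos (Real.exp_pos _) (hsumpos i)
  -- componentwise optimality of π
  have hcomp : ∀ i (a : U i), π i a ≤ π i (ustar i) := by
    intro i a
    have h := hustar (Function.update ustar i a)
    rw [hπjt, hπjt,
        ← Finset.mul_prod_erase Finset.univ (fun j => π j (Function.update ustar i a j))
          (Finset.mem_univ i),
        ← Finset.mul_prod_erase Finset.univ (fun j => π j (ustar j))
          (Finset.mem_univ i)] at h
    have heq : (∏ j ∈ Finset.univ.erase i, π j (Function.update ustar i a j))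
        = ∏ j ∈ Finset.univ.erase i, π j (ustar j) :=
      Finset.prod_congr rfl fun j hj => by
        rw [Function.update_of_ne (Finset.ne_of_mem_erase hj)]
    simp only [Function.update_self, heq] at h
    have hprodpos : 0 < ∏ j ∈ Finset.univ.erase i, π j (ustar j) :=
      Finset.prod_pos (fun j _ => hpos j _)
    exact le_of_mul_le_mul_right h hprodpos
  -- componentwise optimality of Q
  have hQ : ∀ i (a : U i), Q i a ≤ Q i (ustar i) := by
    intro i a
    have h := hcomp i a
    rw [hπ, hπ] at h
    have h2 : Real.exp (f i (Q i a) / α) ≤ Real.exp (f i (Q i (ustar i)) / α) :=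
      (div_le_div_iff_of_pos_right (hsumpos i)).mp h
    have h3 : f i (Q i a) / α ≤ f i (Q i (ustar i)) / α := Real.exp_le_exp.mp h2
    have h4 : f i (Q i a) ≤ f i (Q i (ustar i)) := (div_le_div_iff_of_pos_right hα).mp h3
    exact (hf i).le_iff_le.mp h4
  exact hIGM ustar hQ
end
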